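/- arXiv:2211.14351 — 4 statements merged into one kernel-verified Lean document; each statement's English description precedes it below -/
import Mathlib

section
/- Contractivity of the relative entropy of nonlocality under LR_ns-LOSR transformations: If M is an LR_ns-LOSR transformation and P(a,b|x,y) is a non-signalling bipartite box, then E_LR(M(P)) ≤ E_LR(P), where E_LR(M(P)) is the infimum of S_b(M(P)||Q) over LR_ns quadripartite boxes Q, and E_LR(P) is the infimum of S_b(P||Q') over local non-signalling bipartite boxes Q'. -/
open scoped ENNReal
open Classical

noncomputable section

/-- A probability distribution on a finite type. -/
def IsProbDist {Λ : Type*} [Fintype Λ] (r : Λ → ℝ) : Prop :=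
  (∀ l, 0 ≤ r l) ∧ ∑ l, r l = 1

/-- A conditional probability distribution `p o i = p(o|i)`. -/
def IsCondDist {O I : Type*} [Fintype O] (p : O → I → ℝ) : Prop :=
  (∀ o i, 0 ≤ p o i) ∧ ∀ i, ∑ o, p o i = 1

/-- A bipartite box `P a b x y = P(a,b|x,y)`. -/
def IsBox {A B X Y : Type*} [Fintype A] [Fintype B] (P : A → B → X → Y → ℝ) : Prop :=
  (∀ a b x y, 0 ≤ P a b x y) ∧ ∀ x y, ∑ a, ∑ b, P a b x y = 1

/-- Non-signalling bipartite box. -/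
def NonSignalling {A B X Y : Type*} [Fintype A] [Fintype B] (P : A → B → X → Y → ℝ) : Prop :=
  (∀ a x y y', ∑ b, P a b x y = ∑ b, P a b x y') ∧
  (∀ b x x' y, ∑ a, P a b x y = ∑ a, P a b x' y)

/-- Local (LHV) bipartite box. -/
def IsLocalBox {A B X Y : Type*} [Fintype A] [Fintype B] (P : A → B → X → Y → ℝ) : Prop :=
  ∃ (m : ℕ) (q : Fin m → ℝ) (pA : Fin m → A → X → ℝ) (pB : Fin m → B → Y → ℝ),
    IsProbDist q ∧ (∀ l, IsCondDist (pA l)) ∧ (∀ l, IsCondDist (pB l)) ∧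
    ∀ a b x y, P a b x y = ∑ l, q l * pA l a x * pB l b y

/-- Local-realistic non-signalling quadripartite box (w.r.t. the cut A0A1|B0B1). -/
def IsLRns {A B X Y : Type*} [Fintype A] [Fintype B] [Fintype X] [Fintype Y]
    (P : (A × A) → (B × B) → (X × X) → (Y × Y) → ℝ) : Prop :=
  ∃ (m : ℕ) (r : Fin m → ℝ) (QA : Fin m → A → A → X → X → ℝ) (QB : Fin m → B → B → Y → Y → ℝ),
    IsProbDist r ∧
    (∀ l, IsBox (QA l) ∧ NonSignalling (QA l)) ∧
    (∀ l, IsBox (QB l) ∧ NonSignalling (QB l)) ∧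
    ∀ a b x y, P a b x y = ∑ l, r l * QA l a.1 a.2 x.1 x.2 * QB l b.1 b.2 y.1 y.2

/-- Kullback-Leibler divergence of finitely supported distributions, valued in `[0,∞]`,
with the conventions `0·log(0/q) = 0` and `p·log(p/0) = ∞` for `p > 0`. -/
def klDiv {α : Type*} [Fintype α] (p q : α → ℝ) : ℝ≥0∞ :=
  if ∃ a, p a ≠ 0 ∧ q a = 0 then ⊤
  else ENNReal.ofReal (∑ a, p a * Real.log (p a / q a))

/-- KL-divergence for boxes: the maximum over inputs of the KL-divergence of outputs. -/
def Sb {A B X Y : Type*} [Fintype A] [Fintype B] (P Q : A → B → X → Y → ℝ) : ℝ≥0∞ :=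
  ⨆ (x : X) (y : Y),
    klDiv (fun ab : A × B => P ab.1 ab.2 x y) (fun ab : A × B => Q ab.1 ab.2 x y)

/-- Relative entropy of nonlocality of a bipartite box: infimum of `Sb` over
local non-signalling boxes. -/
def ELRbi {A B X Y : Type*} [Fintype A] [Fintype B] (P : A → B → X → Y → ℝ) : ℝ≥0∞ :=
  ⨅ (Q : A → B → X → Y → ℝ) (_ : IsLocalBox Q ∧ NonSignalling Q), Sb P Q

/-- Relative entropy of nonlocality of a quadripartite box: infimum of `Sb` over
`LR_ns` boxes. -/
def ELRquad {A B X Y : Type*} [Fintype A] [Fintype B] [Fintype X] [Fintype Y]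
    (P : (A × A) → (B × B) → (X × X) → (Y × Y) → ℝ) : ℝ≥0∞ :=
  ⨅ (Q : (A × A) → (B × B) → (X × X) → (Y × Y) → ℝ) (_ : IsLRns Q), Sb P Q

/-- The action of an LOSR transformation, given by an input box `I` and an output box `O`,
on a bipartite box, producing a quadripartite box. -/
def LOSRApply {A B X Y : Type*} [Fintype A] [Fintype B] [Fintype X] [Fintype Y]
    (I : X → Y → (X × X) → (Y × Y) → ℝ)
    (O : (A × A) → (B × B) → ((X × X) × X × A) → ((Y × Y) × Y × B) → ℝ)
    (P : A → B → X → Y → ℝ) : (A × A) → (B × B) → (X × X) → (Y × Y) → ℝ :=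
  fun aa bb xx yy => ∑ x, ∑ y, ∑ a, ∑ b,
    I x y xx yy * P a b x y * O aa bb (xx, x, a) (yy, y, b)

/-- An LOSR transformation from bipartite to quadripartite boxes: both the input box `I`
and the output box `O` are local bipartite boxes (w.r.t. the A-side/B-side split). -/
def IsLOSR {A B X Y : Type*} [Fintype A] [Fintype B] [Fintype X] [Fintype Y]
    (I : X → Y → (X × X) → (Y × Y) → ℝ)
    (O : (A × A) → (B × B) → ((X × X) × X × A) → ((Y × Y) × Y × B) → ℝ) : Prop :=
  (IsBox I ∧ IsLocalBox I) ∧ (IsBox O ∧ IsLocalBox O)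

/-- An `LR_ns`-LOSR transformation: an LOSR transformation mapping every local
non-signalling bipartite box to an `LR_ns` quadripartite box. -/
def IsLRnsLOSR {A B X Y : Type*} [Fintype A] [Fintype B] [Fintype X] [Fintype Y]
    (I : X → Y → (X × X) → (Y × Y) → ℝ)
    (O : (A × A) → (B × B) → ((X × X) × X × A) → ((Y × Y) × Y × B) → ℝ) : Prop :=
  IsLOSR I O ∧
  ∀ P : A → B → X → Y → ℝ, IsBox P → NonSignalling P → IsLocalBox P →
    IsLRns (LOSRApply I O P)

/-- A quadripartite box is a broadcast of a bipartite box `P'`. -/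
def IsBroadcast {A B X Y : Type*} [Fintype A] [Fintype B]
    (P : (A × A) → (B × B) → (X × X) → (Y × Y) → ℝ) (P' : A → B → X → Y → ℝ) : Prop :=
  (∀ a0 b0 x0 x1 y0 y1, ∑ a1, ∑ b1, P (a0, a1) (b0, b1) (x0, x1) (y0, y1) = P' a0 b0 x0 y0) ∧
  (∀ a1 b1 x0 x1 y0 y1, ∑ a0, ∑ b0, P (a0, a1) (b0, b1) (x0, x1) (y0, y1) = P' a1 b1 x1 y1)

/-- Non-signalling among all four parties: marginalizing any single party's output
yields a distribution independent of that party's input. -/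
def FullNS {A B X Y : Type*} [Fintype A] [Fintype B]
    (P : (A × A) → (B × B) → (X × X) → (Y × Y) → ℝ) : Prop :=
  (∀ a1 (b : B × B) x1 (y : Y × Y) x0 x0',
      ∑ a0, P (a0, a1) b (x0, x1) y = ∑ a0, P (a0, a1) b (x0', x1) y) ∧
  (∀ a0 (b : B × B) x0 (y : Y × Y) x1 x1',
      ∑ a1, P (a0, a1) b (x0, x1) y = ∑ a1, P (a0, a1) b (x0, x1') y) ∧
  (∀ (a : A × A) b1 (x : X × X) y1 y0 y0',
      ∑ b0, P a (b0, b1) x (y0, y1) = ∑ b0, P a (b0, b1) x (y0', y1)) ∧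
  (∀ (a : A × A) b0 (x : X × X) y0 y1 y1',
      ∑ b1, P a (b0, b1) x (y0, y1) = ∑ b1, P a (b0, b1) x (y0, y1'))

/-- Marginal of a quadripartite box on parties `A0,B0` (computed at auxiliary inputs
`x1,y1`; independent of them for non-signalling boxes). -/
def margA0B0 {A B X Y : Type*} [Fintype A] [Fintype B]
    (P : (A × A) → (B × B) → (X × X) → (Y × Y) → ℝ) (x0 : X) (y0 : Y) (x1 : X) (y1 : Y)
    (a0 : A) (b0 : B) : ℝ :=
  ∑ a1, ∑ b1, P (a0, a1) (b0, b1) (x0, x1) (y0, y1)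

/-- Marginal of a quadripartite box on parties `A1,B1` (computed at auxiliary inputs
`x0,y0`; independent of them for non-signalling boxes). -/
def margA1B1 {A B X Y : Type*} [Fintype A] [Fintype B]
    (P : (A × A) → (B × B) → (X × X) → (Y × Y) → ℝ) (x0 : X) (y0 : Y) :
    A → B → X → Y → ℝ :=
  fun a1 b1 x1 y1 => ∑ a0, ∑ b0, P (a0, a1) (b0, b1) (x0, x1) (y0, y1)

/-- The conditional bipartite box on parties `A1,B1` given outputs `a0,b0` for
inputs `x0,y0` on parties `A0,B0`. -/
def condBox {A B X Y : Type*} [Fintype A] [Fintype B]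
    (P : (A × A) → (B × B) → (X × X) → (Y × Y) → ℝ) (x0 : X) (y0 : Y) (a0 : A) (b0 : B) :
    A → B → X → Y → ℝ :=
  fun a1 b1 x1 y1 =>
    P (a0, a1) (b0, b1) (x0, x1) (y0, y1) / margA0B0 P x0 y0 x1 y1 a0 b0

/-- The term `P(a0,b0|x0,y0) · S(P(·|··,a0,b0) ‖ Q(·|··,a0,b0))`, with the conventions
that it is `0` when `P(a0,b0|x0,y0) = 0` and `∞` when `P(a0,b0|x0,y0) > 0` but
`Q(a0,b0|x0,y0) = 0`. -/
def condKLTerm {A B X Y : Type*} [Fintype A] [Fintype B]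
    (P Q : (A × A) → (B × B) → (X × X) → (Y × Y) → ℝ)
    (x0 : X) (y0 : Y) (x1 : X) (y1 : Y) (a0 : A) (b0 : B) : ℝ≥0∞ :=
  if margA0B0 P x0 y0 x1 y1 a0 b0 = 0 then 0
  else if margA0B0 Q x0 y0 x1 y1 a0 b0 = 0 then ⊤
  else ENNReal.ofReal (margA0B0 P x0 y0 x1 y1 a0 b0) *
    klDiv (fun ab : A × B => condBox P x0 y0 a0 b0 ab.1 ab.2 x1 y1)
          (fun ab : A × B => condBox Q x0 y0 a0 b0 ab.1 ab.2 x1 y1)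

end

noncomputable section AuxProof

/-- Log-sum inequality. -/
lemma aux_log_sum {ι : Type*} [Fintype ι] (a b : ι → ℝ)
    (ha : ∀ j, 0 ≤ a j) (hb : ∀ j, 0 ≤ b j) (hab : ∀ j, a j ≠ 0 → b j ≠ 0) :
    (∑ j, a j) * Real.log ((∑ j, a j) / (∑ j, b j)) ≤ ∑ j, a j * Real.log (a j / b j) := by
  rcases eq_or_lt_of_le (Finset.sum_nonneg (fun j _ => ha j) : (0:ℝ) ≤ ∑ j, a j) with h0 | hpos
  · have hall : ∀ j ∈ Finset.univ, a j = 0 :=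
      (Finset.sum_eq_zero_iff_of_nonneg (fun j _ => ha j)).mp h0.symm
    rw [← h0, zero_mul]
    refine le_of_eq (Finset.sum_eq_zero fun j _ => ?_).symm
    rw [hall j (Finset.mem_univ j), zero_mul]
  · set Sa := ∑ j, a j with hSa
    set Sb := ∑ j, b j with hSb
    have hj0 : ∃ j, a j ≠ 0 := by
      by_contra h
      push_neg at h
      have h0 : Sa = 0 := by
        rw [hSa]; exact Finset.sum_eq_zero fun j _ => h j
      linarith
    obtain ⟨j0, hj0⟩ := hj0
    have hbj0 : 0 < b j0 := lt_of_le_of_ne (hb j0) (Ne.symm (hab j0 hj0))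
    have hSb0 : 0 < Sb :=
      lt_of_lt_of_le hbj0 (Finset.single_le_sum (fun j _ => hb j) (Finset.mem_univ j0))
    have key : ∀ j, a j * Real.log (Sa / Sb) + (a j - b j * (Sa / Sb)) ≤
        a j * Real.log (a j / b j) := by
      intro j
      rcases eq_or_lt_of_le (ha j) with haj | haj
      · rw [← haj]
        have : (0:ℝ) ≤ b j * (Sa / Sb) :=
          mul_nonneg (hb j) (div_nonneg hpos.le hSb0.le)
        nlinarith
      · have hbj : 0 < b j := lt_of_le_of_ne (hb j) (Ne.symm (hab j (ne_of_gt haj)))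
        set t : ℝ := (b j * Sa) / (a j * Sb) with ht
        have htpos : 0 < t := div_pos (mul_pos hbj hpos) (mul_pos haj hSb0)
        have hlog : Real.log t ≤ t - 1 := Real.log_le_sub_one_of_pos htpos
        have h1 : Real.log (a j / b j) = Real.log (Sa / Sb) - Real.log t := by
          rw [ht]
          rw [Real.log_div (ne_of_gt haj) (ne_of_gt hbj),
            Real.log_div (ne_of_gt hpos) (ne_of_gt hSb0),
            Real.log_div (by positivity) (by positivity),
            Real.log_mul (ne_of_gt hbj) (ne_of_gt hpos),
            Real.log_mul (ne_of_gt haj) (ne_of_gt hSb0)]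
          ring
        have h2 : a j * t = b j * Sa / Sb := by
          rw [ht]; field_simp
        have h4 : b j * (Sa / Sb) = b j * Sa / Sb := (mul_div_assoc _ _ _).symm
        have h5 : a j * Real.log t ≤ a j * t - a j := by
          nlinarith [mul_le_mul_of_nonneg_left hlog (le_of_lt haj)]
        rw [h1, mul_sub]
        linarith
    calc Sa * Real.log (Sa / Sb)
        = ∑ j, (a j * Real.log (Sa / Sb) + (a j - b j * (Sa / Sb))) := by
          rw [Finset.sum_add_distrib, Finset.sum_sub_distrib, ← Finset.sum_mul,
            ← Finset.sum_mul, ← hSa, ← hSb]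
          field_simp
          ring
      _ ≤ ∑ j, a j * Real.log (a j / b j) := Finset.sum_le_sum fun j _ => key j

/-- Data processing inequality for `klDiv` under a classical channel. -/
lemma aux_klDiv_comp_le {ι κ : Type*} [Fintype ι] [Fintype κ]
    (p q : ι → ℝ) (K : ι → κ → ℝ)
    (hp : ∀ j, 0 ≤ p j) (hq : ∀ j, 0 ≤ q j) (hK : ∀ j o, 0 ≤ K j o)
    (hKsum : ∀ j, ∑ o, K j o = 1) :
    klDiv (fun o => ∑ j, p j * K j o) (fun o => ∑ j, q j * K j o) ≤ klDiv p q := by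
  by_cases h : ∃ j, p j ≠ 0 ∧ q j = 0
  · have htop : klDiv p q = ⊤ := by rw [klDiv, if_pos h]
    rw [htop]; exact le_top
  · have h' := h
    push_neg at h
    have hcond : ¬ ∃ o, (∑ j, p j * K j o) ≠ 0 ∧ (∑ j, q j * K j o) = 0 := by
      rintro ⟨o, hpo, hqo⟩
      have hqall : ∀ j ∈ Finset.univ, q j * K j o = 0 :=
        (Finset.sum_eq_zero_iff_of_nonneg
          (fun j _ => mul_nonneg (hq j) (hK j o))).mp hqo
      have : ∃ j, p j * K j o ≠ 0 := by
        by_contra hc; push_neg at hc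
        exact hpo (Finset.sum_eq_zero fun j _ => hc j)
      obtain ⟨j, hj⟩ := this
      have hpj : p j ≠ 0 := fun h0 => hj (by rw [h0, zero_mul])
      have hKj : K j o ≠ 0 := fun h0 => hj (by rw [h0, mul_zero])
      exact (mul_ne_zero (h j hpj) hKj) (hqall j (Finset.mem_univ j))
    rw [klDiv, klDiv, if_neg h', if_neg hcond]
    apply ENNReal.ofReal_le_ofReal
    have step : ∀ o : κ,
        (∑ j, p j * K j o) * Real.log ((∑ j, p j * K j o) / (∑ j, q j * K j o)) ≤
        ∑ j, (p j * K j o) * Real.log (p j / q j) := by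
      intro o
      have hls := aux_log_sum (fun j => p j * K j o) (fun j => q j * K j o)
        (fun j => mul_nonneg (hp j) (hK j o)) (fun j => mul_nonneg (hq j) (hK j o))
        (fun j hj => by
          have hpj : p j ≠ 0 := fun h0 => hj (by simp [h0])
          have hKj : K j o ≠ 0 := fun h0 => hj (by simp [h0])
          exact mul_ne_zero (h j hpj) hKj)
      refine hls.trans (le_of_eq (Finset.sum_congr rfl fun j _ => ?_))
      by_cases hKj : K j o = 0
      · simp [hKj]
      · by_cases hpj : p j = 0
        · simp [hpj]
        · rw [mul_div_mul_right _ _ hKj]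
    calc ∑ o, (∑ j, p j * K j o) * Real.log ((∑ j, p j * K j o) / (∑ j, q j * K j o))
        ≤ ∑ o, ∑ j, (p j * K j o) * Real.log (p j / q j) :=
          Finset.sum_le_sum fun o _ => step o
      _ = ∑ j, ∑ o, (p j * K j o) * Real.log (p j / q j) := Finset.sum_comm
      _ = ∑ j, p j * Real.log (p j / q j) := by
          refine Finset.sum_congr rfl fun j _ => ?_
          rw [show ∀ f : κ → ℝ, (∑ o, f o) = ∑ o, f o from fun _ => rfl]
          calc ∑ o, (p j * K j o) * Real.log (p j / q j)
              = (∑ o, K j o) * (p j * Real.log (p j / q j)) := by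
                rw [Finset.sum_mul]
                exact Finset.sum_congr rfl fun o _ => by ring
            _ = p j * Real.log (p j / q j) := by rw [hKsum j, one_mul]

/-- KL divergence of a mixture against the supremum of the conditional KL divergences. -/
lemma aux_klDiv_mix_le {ι α : Type*} [Fintype ι] [Fintype α]
    (w : ι → ℝ) (p q : ι → α → ℝ)
    (hw : ∀ i, 0 ≤ w i) (hwsum : ∑ i, w i = 1) :
    klDiv (fun j : ι × α => w j.1 * p j.1 j.2) (fun j : ι × α => w j.1 * q j.1 j.2) ≤
      ⨆ i, klDiv (p i) (q i) := by
  by_cases h : ∃ j : ι × α, w j.1 * p j.1 j.2 ≠ 0 ∧ w j.1 * q j.1 j.2 = 0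
  · obtain ⟨j, hjp, hjq⟩ := h
    have hwj : w j.1 ≠ 0 := fun h0 => hjp (by rw [h0, zero_mul])
    have hpj : p j.1 j.2 ≠ 0 := fun h0 => hjp (by rw [h0, mul_zero])
    have hqj : q j.1 j.2 = 0 := by
      rcases mul_eq_zero.mp hjq with h0 | h0
      · exact absurd h0 hwj
      · exact h0
    have htop : klDiv (p j.1) (q j.1) = ⊤ := by
      rw [klDiv, if_pos ⟨j.2, hpj, hqj⟩]
    have : (⊤ : ℝ≥0∞) ≤ ⨆ i, klDiv (p i) (q i) := htop ▸ le_iSup (fun i => klDiv (p i) (q i)) j.1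
    exact le_trans le_top this
  · rw [klDiv, if_neg h]
    set s : ι → ℝ := fun i => ∑ a, p i a * Real.log (p i a / q i a) with hs
    have hsum : (∑ j : ι × α, (w j.1 * p j.1 j.2) *
        Real.log ((w j.1 * p j.1 j.2) / (w j.1 * q j.1 j.2))) = ∑ i, w i * s i := by
      rw [Fintype.sum_prod_type]
      refine Finset.sum_congr rfl fun i _ => ?_
      by_cases hwi : w i = 0
      · simp [hwi]
      · rw [hs, Finset.mul_sum]
        refine Finset.sum_congr rfl fun a _ => ?_
        by_cases hpa : p i a = 0
        · simp [hpa]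
        · rw [mul_div_mul_left _ _ hwi]; ring
    rw [hsum]
    set T : Finset ι := Finset.univ.filter (fun i => w i ≠ 0) with hT
    have hTne : T.Nonempty := by
      by_contra hc
      rw [Finset.not_nonempty_iff_eq_empty] at hc
      have : ∀ i ∈ Finset.univ, w i = 0 := by
        intro i _
        by_contra hwi
        have : i ∈ T := by rw [hT]; simp [hwi]
        rw [hc] at this; exact absurd this (Finset.notMem_empty i)
      have : (∑ i, w i) = 0 := Finset.sum_eq_zero this
      rw [hwsum] at this; norm_num at this
    obtain ⟨i0, hi0T, hi0max⟩ := Finset.exists_max_image T s hTne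
    have hwi0 : w i0 ≠ 0 := (Finset.mem_filter.mp hi0T).2
    have hsum2 : (∑ i, w i * s i) ≤ s i0 := by
      have h1 : (∑ i, w i * s i) = ∑ i ∈ T, w i * s i := by
        rw [hT]
        rw [Finset.sum_filter]
        refine Finset.sum_congr rfl fun i _ => ?_
        by_cases hwi : w i = 0 <;> simp [hwi]
      have h2 : (∑ i ∈ T, w i * s i) ≤ ∑ i ∈ T, w i * s i0 :=
        Finset.sum_le_sum fun i hi =>
          mul_le_mul_of_nonneg_left (hi0max i hi) (hw i)
      have h3 : (∑ i ∈ T, w i * s i0) = s i0 := by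
        rw [← Finset.sum_mul, hT, Finset.sum_filter_ne_zero, hwsum, one_mul]
      linarith [h1, h2, h3]
    have hnoz : ¬ ∃ a, p i0 a ≠ 0 ∧ q i0 a = 0 := by
      rintro ⟨a, hpa, hqa⟩
      exact h ⟨(i0, a), mul_ne_zero hwi0 hpa, by simp [hqa]⟩
    have hkl : klDiv (p i0) (q i0) = ENNReal.ofReal (s i0) := by
      rw [klDiv, if_neg hnoz]
    calc ENNReal.ofReal (∑ i, w i * s i) ≤ ENNReal.ofReal (s i0) :=
          ENNReal.ofReal_le_ofReal hsum2
      _ = klDiv (p i0) (q i0) := hkl.symm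
      _ ≤ ⨆ i, klDiv (p i) (q i) := le_iSup (fun i => klDiv (p i) (q i)) i0

/-- A local box is a box. -/
lemma aux_isBox_of_local {A B X Y : Type*} [Fintype A] [Fintype B]
    {P : A → B → X → Y → ℝ} (h : IsLocalBox P) : IsBox P := by
  obtain ⟨m, qd, pA, pB, hqd, hA, hB, hrep⟩ := h
  constructor
  · intro a b x y
    rw [hrep]
    exact Finset.sum_nonneg fun l _ =>
      mul_nonneg (mul_nonneg (hqd.1 l) ((hA l).1 a x)) ((hB l).1 b y)
  · intro x y
    have h1 : ∀ a : A, ∑ b, P a b x y = ∑ l, qd l * pA l a x := by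
      intro a
      calc ∑ b, P a b x y = ∑ b, ∑ l, qd l * pA l a x * pB l b y := by
            exact Finset.sum_congr rfl fun b _ => hrep a b x y
        _ = ∑ l, ∑ b, qd l * pA l a x * pB l b y := Finset.sum_comm
        _ = ∑ l, qd l * pA l a x := by
            refine Finset.sum_congr rfl fun l _ => ?_
            rw [← Finset.mul_sum, (hB l).2 y, mul_one]
    calc ∑ a, ∑ b, P a b x y = ∑ a, ∑ l, qd l * pA l a x :=
          Finset.sum_congr rfl fun a _ => h1 a
      _ = ∑ l, ∑ a, qd l * pA l a x := Finset.sum_comm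
      _ = ∑ l, qd l := by
          refine Finset.sum_congr rfl fun l _ => ?_
          rw [← Finset.mul_sum, (hA l).2 x, mul_one]
      _ = 1 := hqd.2

/-- Contractivity of `Sb` under LOSR transformations. -/
lemma aux_Sb_losr_le {A B X Y : Type*} [Fintype A] [Fintype B] [Fintype X] [Fintype Y]
    (I : X → Y → (X × X) → (Y × Y) → ℝ)
    (O : (A × A) → (B × B) → ((X × X) × X × A) → ((Y × Y) × Y × B) → ℝ)
    (hI : IsBox I) (hO : IsBox O)
    (P Q : A → B → X → Y → ℝ) (hPnn : ∀ a b x y, 0 ≤ P a b x y)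
    (hQnn : ∀ a b x y, 0 ≤ Q a b x y) :
    Sb (LOSRApply I O P) (LOSRApply I O Q) ≤ Sb P Q := by
  rw [Sb]
  refine iSup_le fun xx => iSup_le fun yy => ?_
  set w : X × Y → ℝ := fun i => I i.1 i.2 xx yy with hw
  set pf : X × Y → A × B → ℝ := fun i a => P a.1 a.2 i.1 i.2 with hpf
  set qf : X × Y → A × B → ℝ := fun i a => Q a.1 a.2 i.1 i.2 with hqf
  set K : ((X × Y) × (A × B)) → ((A × A) × (B × B)) → ℝ :=
    fun j o => O o.1 o.2 (xx, j.1.1, j.2.1) (yy, j.1.2, j.2.2) with hK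
  have h1 : (fun o : (A × A) × (B × B) => LOSRApply I O P o.1 o.2 xx yy) =
      (fun o => ∑ j : (X × Y) × (A × B), (w j.1 * pf j.1 j.2) * K j o) := by
    funext o
    simp only [LOSRApply, Fintype.sum_prod_type, hw, hpf, hK]
  have h2 : (fun o : (A × A) × (B × B) => LOSRApply I O Q o.1 o.2 xx yy) =
      (fun o => ∑ j : (X × Y) × (A × B), (w j.1 * qf j.1 j.2) * K j o) := by
    funext o
    simp only [LOSRApply, Fintype.sum_prod_type, hw, hqf, hK]
  rw [h1, h2]
  have hdpi := aux_klDiv_comp_le (fun j : (X × Y) × (A × B) => w j.1 * pf j.1 j.2)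
    (fun j => w j.1 * qf j.1 j.2) K
    (fun j => mul_nonneg (hI.1 _ _ _ _) (hPnn _ _ _ _))
    (fun j => mul_nonneg (hI.1 _ _ _ _) (hQnn _ _ _ _))
    (fun j o => hO.1 _ _ _ _)
    (fun j => by
      simp only [hK]
      rw [Fintype.sum_prod_type]
      exact hO.2 _ _)
  refine hdpi.trans ?_
  have hmix := aux_klDiv_mix_le w pf qf (fun i => hI.1 _ _ _ _)
    (by rw [hw]; simpa [Fintype.sum_prod_type] using hI.2 xx yy)
  refine hmix.trans ?_
  rw [Sb, iSup_prod]

end AuxProof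

/-- **Contractivity of the relative entropy of nonlocality under `LR_ns`-LOSR
transformations.** -/
theorem relEntNL_contractive_under_LRnsLOSR
    {A B X Y : Type*} [Fintype A] [Fintype B] [Fintype X] [Fintype Y]
    (I : X → Y → (X × X) → (Y × Y) → ℝ)
    (O : (A × A) → (B × B) → ((X × X) × X × A) → ((Y × Y) × Y × B) → ℝ)
    (hM : IsLRnsLOSR I O)
    (P : A → B → X → Y → ℝ) (hbox : IsBox P) (hns : NonSignalling P) :
    ELRquad (LOSRApply I O P) ≤ ELRbi P := by
  rw [ELRbi]
  refine le_iInf fun Q' => le_iInf fun hQ' => ?_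
  obtain ⟨hQloc, hQns⟩ := hQ'
  have hQbox : IsBox Q' := aux_isBox_of_local hQloc
  have hLR : IsLRns (LOSRApply I O Q') := hM.2 Q' hQbox hQns hQloc
  calc ELRquad (LOSRApply I O P) ≤ Sb (LOSRApply I O P) (LOSRApply I O Q') := by
        rw [ELRquad]
        exact iInf₂_le (LOSRApply I O Q') hLR
    _ ≤ Sb P Q' :=
        aux_Sb_losr_le I O hM.1.1.1 hM.1.2.1 P Q' hbox.1 hQbox.1
end

section
/- Let P(a0,a1,b0,b1|x0,x1,y0,y1) be a quadripartite box that is non-signalling among all four parties, and suppose its marginal P(a1,b1|x1,y1) is nonlocal. Then for every pair of inputs (x0,y0) there exist outputs (a0,b0) such that P(a0,b0|x0,y0) ≠ 0 and the conditional bipartite box P(a1,b1|x0,x1,y0,y1,a0,b0) (with inputs (x1,y1) and outputs (a1,b1), for the fixed x0,y0,a0,b0) is nonlocal. -/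
open scoped ENNReal
open Classical

section Aux

variable {A B X Y : Type*} [Fintype A] [Fintype B]

lemma margA0B0_indep (P : (A × A) → (B × B) → (X × X) → (Y × Y) → ℝ)
    (hns : FullNS P) (x0 : X) (y0 : Y) (a0 : A) (b0 : B) (x1 y1 x1' y1') :
    margA0B0 P x0 y0 x1 y1 a0 b0 = margA0B0 P x0 y0 x1' y1' a0 b0 := by
  obtain ⟨h1, h2, h3, h4⟩ := hns
  unfold margA0B0
  have step1 : ∑ a1, ∑ b1, P (a0,a1) (b0,b1) (x0,x1) (y0,y1)
      = ∑ a1, ∑ b1, P (a0,a1) (b0,b1) (x0,x1) (y0,y1') :=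
    Finset.sum_congr rfl fun a1 _ => h4 (a0,a1) b0 (x0,x1) y0 y1 y1'
  rw [step1, Finset.sum_comm]
  have step2 : ∑ b1, ∑ a1, P (a0,a1) (b0,b1) (x0,x1) (y0,y1')
      = ∑ b1, ∑ a1, P (a0,a1) (b0,b1) (x0,x1') (y0,y1') :=
    Finset.sum_congr rfl fun b1 _ => h2 a0 (b0,b1) x0 (y0,y1') x1 x1'
  rw [step2, Finset.sum_comm]

lemma isLocalBox_of_fintype {Λ : Type*} [Fintype Λ]
    (q : Λ → ℝ) (pA : Λ → A → X → ℝ) (pB : Λ → B → Y → ℝ)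
    (hq0 : ∀ l, 0 ≤ q l) (hq1 : ∑ l, q l = 1)
    (hA : ∀ l, IsCondDist (pA l)) (hB : ∀ l, IsCondDist (pB l))
    (P : A → B → X → Y → ℝ)
    (hP : ∀ a b x y, P a b x y = ∑ l, q l * pA l a x * pB l b y) :
    IsLocalBox P := by
  let e := (Fintype.equivFin Λ).symm
  refine ⟨Fintype.card Λ, fun l => q (e l), fun l => pA (e l), fun l => pB (e l),
    ⟨fun l => hq0 _, ?_⟩, fun l => hA _, fun l => hB _, ?_⟩
  · rw [Equiv.sum_comp e q]; exact hq1
  · intro a b x y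
    rw [hP a b x y, ← Equiv.sum_comp e (fun l => q l * pA l a x * pB l b y)]

lemma isLocalBox_mix {ι : Type*} [Fintype ι]
    (w : ι → ℝ) (Q : ι → A → B → X → Y → ℝ)
    (hw0 : ∀ i, 0 ≤ w i) (hw1 : ∑ i, w i = 1)
    (hQ : ∀ i, IsLocalBox (Q i)) (P : A → B → X → Y → ℝ)
    (hP : ∀ a b x y, P a b x y = ∑ i, w i * Q i a b x y) : IsLocalBox P := by
  choose M q pA pB hmodel using hQ
  refine isLocalBox_of_fintype (Λ := Σ i : ι, Fin (M i))
    (fun s => w s.1 * q s.1 s.2) (fun s => pA s.1 s.2) (fun s => pB s.1 s.2)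
    (fun s => mul_nonneg (hw0 _) ((hmodel s.1).1.1 _)) ?_ (fun s => (hmodel s.1).2.1 _)
    (fun s => (hmodel s.1).2.2.1 _) P ?_
  · rw [← Finset.univ_sigma_univ, Finset.sum_sigma]
    have : ∀ i, ∑ l : Fin (M i), w i * q i l = w i := by
      intro i
      rw [← Finset.mul_sum, (hmodel i).1.2, mul_one]
    simp only [this]; exact hw1
  · intro a b x y
    rw [hP a b x y, ← Finset.univ_sigma_univ, Finset.sum_sigma]
    refine Finset.sum_congr rfl fun i _ => ?_
    rw [(hmodel i).2.2.2 a b x y, Finset.mul_sum]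
    exact Finset.sum_congr rfl fun l _ => by ring

lemma isLocalBox_uniform [Nonempty A] [Nonempty B] :
    IsLocalBox (fun (_ : A) (_ : B) (_ : X) (_ : Y) =>
      (Fintype.card A : ℝ)⁻¹ * (Fintype.card B : ℝ)⁻¹) := by
  have hA : (Fintype.card A : ℝ) ≠ 0 := by
    exact_mod_cast (Fintype.card_pos).ne'
  have hB : (Fintype.card B : ℝ) ≠ 0 := by
    exact_mod_cast (Fintype.card_pos).ne'
  refine ⟨1, fun _ => 1, fun _ _ _ => (Fintype.card A : ℝ)⁻¹,
    fun _ _ _ => (Fintype.card B : ℝ)⁻¹, ⟨fun _ => zero_le_one, by simp⟩, ?_, ?_, ?_⟩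
  · intro l
    refine ⟨fun _ _ => by positivity, fun i => ?_⟩
    simp [Finset.sum_const, Finset.card_univ, mul_inv_cancel₀ hA]
  · intro l
    refine ⟨fun _ _ => by positivity, fun i => ?_⟩
    simp [Finset.sum_const, Finset.card_univ, mul_inv_cancel₀ hB]
  · intro a b x y; simp

end Aux

/-- If a fully non-signalling quadripartite box has a nonlocal `(A1,B1)`-marginal, then for
every pair of inputs `(x0,y0)` there are outputs `(a0,b0)` occurring with nonzero
probability such that the conditional box on `(A1,B1)` is nonlocal. -/
theorem exists_nonlocal_conditional_of_nonlocal_marginal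
    {A B X Y : Type*} [Fintype A] [Fintype B] [Fintype X] [Fintype Y]
    (P : (A × A) → (B × B) → (X × X) → (Y × Y) → ℝ)
    (hPbox : IsBox P) (hPns : FullNS P)
    (hnl : ∀ x0 y0, ¬ IsLocalBox (margA1B1 P x0 y0)) :
    ∀ x0 y0, ∃ a0 b0,
      (∀ x1 y1, margA0B0 P x0 y0 x1 y1 a0 b0 ≠ 0) ∧
      ¬ IsLocalBox (condBox P x0 y0 a0 b0) := by
  intro x0 y0
  have hAne : Nonempty A := by
    by_contra hA
    rw [not_nonempty_iff] at hA
    have h := hPbox.2 (x0, x0) (y0, y0)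
    simp at h
  have hBne : Nonempty B := by
    by_contra hB
    rw [not_nonempty_iff] at hB
    have h := hPbox.2 (x0, x0) (y0, y0)
    simp at h
  by_contra hcon
  push_neg at hcon
  set m0 : A → B → ℝ := fun a0 b0 => margA0B0 P x0 y0 x0 y0 a0 b0 with hm0
  have hindep : ∀ a0 b0 x1 y1, margA0B0 P x0 y0 x1 y1 a0 b0 = m0 a0 b0 :=
    fun a0 b0 x1 y1 => margA0B0_indep P hPns x0 y0 a0 b0 x1 y1 x0 y0
  have hm0nn : ∀ a0 b0, 0 ≤ m0 a0 b0 := fun a0 b0 =>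
    Finset.sum_nonneg fun _ _ => Finset.sum_nonneg fun _ _ => hPbox.1 _ _ _ _
  have hm0sum : ∑ ab : A × B, m0 ab.1 ab.2 = 1 := by
    have h := hPbox.2 (x0, x0) (y0, y0)
    simp only [Fintype.sum_prod_type] at h
    simp only [hm0, margA0B0, Fintype.sum_prod_type]
    rw [← h]
    exact Finset.sum_congr rfl fun a0 _ => Finset.sum_comm
  have hzero : ∀ a0 b0, m0 a0 b0 = 0 →
      ∀ a1 b1 x1 y1, P (a0, a1) (b0, b1) (x0, x1) (y0, y1) = 0 := by
    intro a0 b0 h0 a1 b1 x1 y1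
    have h0' : margA0B0 P x0 y0 x1 y1 a0 b0 = 0 := by rw [hindep]; exact h0
    have h1 := (Finset.sum_eq_zero_iff_of_nonneg
      (fun a1 _ => Finset.sum_nonneg fun b1 _ => hPbox.1 _ _ _ _)).mp h0' a1
      (Finset.mem_univ _)
    exact (Finset.sum_eq_zero_iff_of_nonneg
      (fun b1 _ => hPbox.1 _ _ _ _)).mp h1 b1 (Finset.mem_univ _)
  set Qc : A × B → A → B → X → Y → ℝ := fun ab =>
    if m0 ab.1 ab.2 = 0 then
      (fun _ _ _ _ => (Fintype.card A : ℝ)⁻¹ * (Fintype.card B : ℝ)⁻¹)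
    else condBox P x0 y0 ab.1 ab.2 with hQc
  have hQcLoc : ∀ ab, IsLocalBox (Qc ab) := by
    intro ab
    by_cases h : m0 ab.1 ab.2 = 0
    · simp only [hQc, if_pos h]; exact isLocalBox_uniform
    · simp only [hQc, if_neg h]
      exact hcon ab.1 ab.2 (fun x1 y1 => by rw [hindep]; exact h)
  have hdecomp : ∀ a1 b1 x1 y1, margA1B1 P x0 y0 a1 b1 x1 y1
      = ∑ ab : A × B, m0 ab.1 ab.2 * Qc ab a1 b1 x1 y1 := by
    intro a1 b1 x1 y1
    unfold margA1B1
    rw [Fintype.sum_prod_type]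
    refine Finset.sum_congr rfl fun a0 _ => Finset.sum_congr rfl fun b0 _ => ?_
    set ab : A × B := (a0, b0) with hab
    show P (ab.1, a1) (ab.2, b1) (x0, x1) (y0, y1) = m0 ab.1 ab.2 * Qc ab a1 b1 x1 y1
    by_cases h : m0 ab.1 ab.2 = 0
    · rw [hzero ab.1 ab.2 h a1 b1 x1 y1, h, zero_mul]
    · simp only [hQc, if_neg h]
      unfold condBox
      rw [hindep, mul_comm, div_mul_cancel₀ _ h]
  exact hnl x0 y0 (isLocalBox_mix (fun ab : A × B => m0 ab.1 ab.2) Qc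
    (fun ab => hm0nn _ _) hm0sum hQcLoc _ hdecomp)
end

section
/- Let Q(a0,a1,b0,b1|x0,x1,y0,y1) be an LR_ns quadripartite box and let P(a0,a1,b0,b1|x0,x1,y0,y1) be a quadripartite box that is non-signalling among all four parties and whose marginal P(a1,b1|x1,y1) is nonlocal. Then for every pair of inputs (x0,y0): max over (x1,y1) of Σ_{a0,b0} P(a0,b0|x0,y0) · S(P(a1,b1|x0,x1,y0,y1,a0,b0) || Q(a1,b1|x0,x1,y0,y1,a0,b0)) > 0, where terms with P(a0,b0|x0,y0) = 0 are dropped and a term with P(a0,b0|x0,y0) > 0 but Q(a0,b0|x0,y0) = 0 is taken to be ∞. -/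
open scoped ENNReal
open Classical

lemma gibbs_eq {α : Type*} [Fintype α] (p q : α → ℝ)
    (hp0 : ∀ a, 0 ≤ p a) (hq0 : ∀ a, 0 ≤ q a)
    (hp1 : ∑ a, p a = 1) (hq1 : ∑ a, q a = 1)
    (hpq : ∀ a, p a ≠ 0 → q a ≠ 0)
    (h : ∑ a, p a * Real.log (p a / q a) ≤ 0) : p = q := by
  have key : ∀ a, p a - q a ≤ p a * Real.log (p a / q a) := by
    intro a
    rcases eq_or_lt_of_le (hp0 a) with h0 | h0
    · rw [← h0]; simpa using hq0 a
    · have hqa : 0 < q a := (hq0 a).lt_of_ne' (hpq a (ne_of_gt h0))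
      have hlog : Real.log (q a / p a) ≤ q a / p a - 1 :=
        Real.log_le_sub_one_of_pos (div_pos hqa h0)
      have e1 : Real.log (p a / q a) = - Real.log (q a / p a) := by
        rw [← Real.log_inv, inv_div]
      have e2 : p a * (q a / p a) = q a := by field_simp
      have hmul := mul_le_mul_of_nonneg_left hlog (le_of_lt h0)
      rw [e1]
      nlinarith [hmul, e2]
  have hdiff : ∀ a ∈ Finset.univ, (0:ℝ) ≤ p a * Real.log (p a / q a) - (p a - q a) := by
    intro a _; linarith [key a]
  have hsum : ∑ a, (p a * Real.log (p a / q a) - (p a - q a)) = 0 := by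
    have h1 : ∑ a, (p a * Real.log (p a / q a) - (p a - q a))
        = (∑ a, p a * Real.log (p a / q a)) - ((∑ a, p a) - ∑ a, q a) := by
      rw [Finset.sum_sub_distrib, Finset.sum_sub_distrib]
    rw [h1, hp1, hq1]
    have h2 : (0:ℝ) ≤ ∑ a, (p a * Real.log (p a / q a) - (p a - q a)) :=
      Finset.sum_nonneg hdiff
    rw [h1, hp1, hq1] at h2
    linarith
  have heach := (Finset.sum_eq_zero_iff_of_nonneg hdiff).mp hsum
  funext a
  have heq : p a * Real.log (p a / q a) = p a - q a := by
    have := heach a (Finset.mem_univ a); linarith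
  rcases eq_or_lt_of_le (hp0 a) with h0 | h0
  · have : q a = 0 := by rw [← h0] at heq; simpa using heq.symm
    rw [← h0, this]
  · have hqa : 0 < q a := (hq0 a).lt_of_ne' (hpq a (ne_of_gt h0))
    by_contra hne
    have hne' : q a / p a ≠ 1 := by
      intro h1
      apply hne
      field_simp at h1
      linarith
    have hlt := Real.log_lt_sub_one_of_pos (div_pos hqa h0) hne'
    have e1 : Real.log (p a / q a) = - Real.log (q a / p a) := by
      rw [← Real.log_inv, inv_div]
    have e2 : p a * (q a / p a) = q a := by field_simp
    have hmul := mul_lt_mul_of_pos_left hlt h0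
    rw [e1] at heq
    nlinarith [hmul, e2]

lemma eq_of_klDiv_zero_aux {α : Type*} [Fintype α] (p q : α → ℝ)
    (hp0 : ∀ a, 0 ≤ p a) (hq0 : ∀ a, 0 ≤ q a)
    (hp1 : ∑ a, p a = 1) (hq1 : ∑ a, q a = 1)
    (hc : ¬ ∃ a, p a ≠ 0 ∧ q a = 0)
    (h : ENNReal.ofReal (∑ a, p a * Real.log (p a / q a)) = 0) : p = q := by
  push_neg at hc
  exact gibbs_eq p q hp0 hq0 hp1 hq1 hc (ENNReal.ofReal_eq_zero.mp h)

/-- If `Q` is `LR_ns` and `P` is fully non-signalling with nonlocal `(A1,B1)`-marginal, then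
for every `(x0,y0)` the maximum over `(x1,y1)` of the average conditional KL-divergence
is strictly positive. -/
theorem avg_conditional_klDiv_pos
    {A B X Y : Type*} [Fintype A] [Fintype B] [Fintype X] [Fintype Y]
    (Q : (A × A) → (B × B) → (X × X) → (Y × Y) → ℝ) (hQ : IsLRns Q)
    (P : (A × A) → (B × B) → (X × X) → (Y × Y) → ℝ)
    (hPbox : IsBox P) (hPns : FullNS P)
    (hnl : ∀ x0 y0, ¬ IsLocalBox (margA1B1 P x0 y0)) :
    ∀ x0 y0,
      0 < ⨆ (x1 : X) (y1 : Y), ∑ a0, ∑ b0, condKLTerm P Q x0 y0 x1 y1 a0 b0 := by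
  intro x0 y0
  by_contra hcon
  have h0 : (⨆ (x1 : X) (y1 : Y), ∑ a0, ∑ b0, condKLTerm P Q x0 y0 x1 y1 a0 b0) = 0 := by
    simpa [pos_iff_ne_zero] using hcon
  -- every term vanishes
  have hzero : ∀ x1 y1 a0 b0, condKLTerm P Q x0 y0 x1 y1 a0 b0 = 0 := by
    intro x1 y1 a0 b0
    have h1 : (∑ a0, ∑ b0, condKLTerm P Q x0 y0 x1 y1 a0 b0) = 0 := by
      refine le_antisymm ?_ zero_le
      rw [← h0]
      exact le_iSup₂ (f := fun x1 y1 => ∑ a0, ∑ b0, condKLTerm P Q x0 y0 x1 y1 a0 b0) x1 y1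
    have h2 := (Finset.sum_eq_zero_iff.mp h1) a0 (Finset.mem_univ a0)
    exact (Finset.sum_eq_zero_iff.mp h2) b0 (Finset.mem_univ b0)
  -- nonemptiness
  have hA : Nonempty A := by
    by_contra h
    have hh := hPbox.2 (x0, x0) (y0, y0)
    haveI : IsEmpty A := not_nonempty_iff.mp h
    simp [Finset.univ_eq_empty] at hh
  have hB : Nonempty B := by
    by_contra h
    have hh := hPbox.2 (x0, x0) (y0, y0)
    haveI : IsEmpty B := not_nonempty_iff.mp h
    simp [Finset.univ_eq_empty] at hh
  -- decompose Q
  obtain ⟨m, r, QA, QB, ⟨hr0, hr1⟩, hQAall, hQBall, hQeq⟩ := hQ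
  -- basic nonnegativity
  have hQnn : ∀ a b x y, 0 ≤ Q a b x y := by
    intro a b x y
    rw [hQeq]
    exact Finset.sum_nonneg fun l _ => mul_nonneg
      (mul_nonneg (hr0 l) ((hQAall l).1.1 _ _ _ _)) ((hQBall l).1.1 _ _ _ _)
  have hPmnn : ∀ x1 y1 a0 b0, 0 ≤ margA0B0 P x0 y0 x1 y1 a0 b0 := fun x1 y1 a0 b0 =>
    Finset.sum_nonneg fun a1 _ => Finset.sum_nonneg fun b1 _ => hPbox.1 _ _ _ _
  have hMnn : ∀ x1 y1 a0 b0, 0 ≤ margA0B0 Q x0 y0 x1 y1 a0 b0 := fun x1 y1 a0 b0 =>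
    Finset.sum_nonneg fun a1 _ => Finset.sum_nonneg fun b1 _ => hQnn _ _ _ _
  -- independence of P marginal on x1 y1
  have hPmind : ∀ x1 y1 a0 b0,
      margA0B0 P x0 y0 x1 y1 a0 b0 = margA0B0 P x0 y0 x0 y0 a0 b0 := by
    intro x1 y1 a0 b0
    unfold margA0B0
    calc ∑ a1, ∑ b1, P (a0, a1) (b0, b1) (x0, x1) (y0, y1)
        = ∑ b1, ∑ a1, P (a0, a1) (b0, b1) (x0, x1) (y0, y1) := Finset.sum_comm
      _ = ∑ b1, ∑ a1, P (a0, a1) (b0, b1) (x0, x0) (y0, y1) := by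
          exact Finset.sum_congr rfl fun b1 _ => hPns.2.1 a0 (b0, b1) x0 (y0, y1) x1 x0
      _ = ∑ a1, ∑ b1, P (a0, a1) (b0, b1) (x0, x0) (y0, y1) := Finset.sum_comm
      _ = ∑ a1, ∑ b1, P (a0, a1) (b0, b1) (x0, x0) (y0, y0) := by
          exact Finset.sum_congr rfl fun a1 _ => hPns.2.2.2 (a0, a1) b0 (x0, x0) y0 y1 y0
  -- NS of QA, QB marginals
  have hαind : ∀ (l : Fin m) a0 x1, ∑ a1, QA l a0 a1 x0 x1 = ∑ a1, QA l a0 a1 x0 x0 :=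
    fun l a0 x1 => (hQAall l).2.1 a0 x0 x1 x0
  have hβind : ∀ (l : Fin m) b0 y1, ∑ b1, QB l b0 b1 y0 y1 = ∑ b1, QB l b0 b1 y0 y0 :=
    fun l b0 y1 => (hQBall l).2.1 b0 y0 y1 y0
  have hαnn : ∀ (l : Fin m) a0 x1, 0 ≤ ∑ a1, QA l a0 a1 x0 x1 := fun l a0 x1 =>
    Finset.sum_nonneg fun a1 _ => (hQAall l).1.1 _ _ _ _
  have hβnn : ∀ (l : Fin m) b0 y1, 0 ≤ ∑ b1, QB l b0 b1 y0 y1 := fun l b0 y1 =>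
    Finset.sum_nonneg fun b1 _ => (hQBall l).1.1 _ _ _ _
  -- factorization of Q marginal
  have hfac : ∀ (l : Fin m) a0 b0 x1 y1,
      (∑ a1, ∑ b1, r l * QA l a0 a1 x0 x1 * QB l b0 b1 y0 y1)
        = r l * (∑ a1, QA l a0 a1 x0 x1) * (∑ b1, QB l b0 b1 y0 y1) := by
    intro l a0 b0 x1 y1
    simp only [Finset.mul_sum, Finset.sum_mul]
    rw [Finset.sum_comm]
  have hMQ : ∀ x1 y1 a0 b0, margA0B0 Q x0 y0 x1 y1 a0 b0
      = ∑ l, r l * (∑ a1, QA l a0 a1 x0 x0) * (∑ b1, QB l b0 b1 y0 y0) := by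
    intro x1 y1 a0 b0
    unfold margA0B0
    calc ∑ a1, ∑ b1, Q (a0, a1) (b0, b1) (x0, x1) (y0, y1)
        = ∑ a1, ∑ l, ∑ b1, r l * QA l a0 a1 x0 x1 * QB l b0 b1 y0 y1 := by
          simp only [hQeq]
          exact Finset.sum_congr rfl fun a1 _ => Finset.sum_comm
      _ = ∑ l, ∑ a1, ∑ b1, r l * QA l a0 a1 x0 x1 * QB l b0 b1 y0 y1 := Finset.sum_comm
      _ = ∑ l, r l * (∑ a1, QA l a0 a1 x0 x0) * (∑ b1, QB l b0 b1 y0 y0) := by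
          refine Finset.sum_congr rfl fun l _ => ?_
          rw [hfac, hαind, hβind]
  have hMind : ∀ x1 y1 a0 b0,
      margA0B0 Q x0 y0 x1 y1 a0 b0 = margA0B0 Q x0 y0 x0 y0 a0 b0 := by
    intro x1 y1 a0 b0; rw [hMQ x1 y1 a0 b0, hMQ x0 y0 a0 b0]
  -- Pm ≠ 0 → M ≠ 0
  have hMne : ∀ a0 b0, margA0B0 P x0 y0 x0 y0 a0 b0 ≠ 0 →
      margA0B0 Q x0 y0 x0 y0 a0 b0 ≠ 0 := by
    intro a0 b0 hP hM
    have hz := hzero x0 y0 a0 b0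
    rw [condKLTerm, if_neg hP, if_pos hM] at hz
    simp at hz
  -- the key identity
  have hkey : ∀ a0 b0 a1 b1 x1 y1, P (a0, a1) (b0, b1) (x0, x1) (y0, y1)
      = margA0B0 P x0 y0 x0 y0 a0 b0 *
        (Q (a0, a1) (b0, b1) (x0, x1) (y0, y1) / margA0B0 Q x0 y0 x0 y0 a0 b0) := by
    intro a0 b0 a1 b1 x1 y1
    by_cases hPm0 : margA0B0 P x0 y0 x0 y0 a0 b0 = 0
    · rw [hPm0, zero_mul]
      have hs : ∑ a1, ∑ b1, P (a0, a1) (b0, b1) (x0, x1) (y0, y1) = 0 :=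
        (hPmind x1 y1 a0 b0).trans hPm0
      have h1 := (Finset.sum_eq_zero_iff_of_nonneg
        (fun a1 _ => Finset.sum_nonneg fun b1 _ => hPbox.1 _ _ _ _)).mp hs a1
        (Finset.mem_univ a1)
      exact (Finset.sum_eq_zero_iff_of_nonneg
        (fun b1 _ => hPbox.1 _ _ _ _)).mp h1 b1 (Finset.mem_univ b1)
    · have hz := hzero x1 y1 a0 b0
      rw [condKLTerm] at hz
      rw [hPmind x1 y1 a0 b0] at hz
      rw [if_neg hPm0] at hz
      by_cases hMz : margA0B0 Q x0 y0 x1 y1 a0 b0 = 0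
      · rw [if_pos hMz] at hz; simp at hz
      rw [if_neg hMz] at hz
      have hPmpos : 0 < margA0B0 P x0 y0 x0 y0 a0 b0 :=
        (hPmnn x0 y0 a0 b0).lt_of_ne' hPm0
      have hkl : klDiv (fun ab : A × B => condBox P x0 y0 a0 b0 ab.1 ab.2 x1 y1)
          (fun ab : A × B => condBox Q x0 y0 a0 b0 ab.1 ab.2 x1 y1) = 0 := by
        rcases mul_eq_zero.mp hz with h | h
        · rw [ENNReal.ofReal_eq_zero] at h; linarith
        · exact h
      have hPmz1 : margA0B0 P x0 y0 x1 y1 a0 b0 ≠ 0 := by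
        rw [hPmind x1 y1 a0 b0]; exact hPm0
      -- the conditional distributions
      have hp0 : ∀ ab : A × B, 0 ≤ condBox P x0 y0 a0 b0 ab.1 ab.2 x1 y1 := fun ab =>
        div_nonneg (hPbox.1 _ _ _ _) (hPmnn x1 y1 a0 b0)
      have hq0 : ∀ ab : A × B, 0 ≤ condBox Q x0 y0 a0 b0 ab.1 ab.2 x1 y1 := fun ab =>
        div_nonneg (hQnn _ _ _ _) (hMnn x1 y1 a0 b0)
      have hp1 : ∑ ab : A × B, condBox P x0 y0 a0 b0 ab.1 ab.2 x1 y1 = 1 := by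
        simp only [condBox, Fintype.sum_prod_type, ← Finset.sum_div]
        exact div_self hPmz1
      have hq1 : ∑ ab : A × B, condBox Q x0 y0 a0 b0 ab.1 ab.2 x1 y1 = 1 := by
        simp only [condBox, Fintype.sum_prod_type, ← Finset.sum_div]
        exact div_self hMz
      -- klDiv = 0 implies no bad atoms and sum ≤ 0
      rw [klDiv] at hkl
      split_ifs at hkl with hc
      · simp at hkl
      have hfeq := eq_of_klDiv_zero_aux _ _ hp0 hq0 hp1 hq1 hc hkl
      have hcond := congrFun hfeq (a1, b1)
      dsimp only at hcond
      rw [condBox, condBox] at hcond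
      rw [hPmind x1 y1 a0 b0, hMind x1 y1 a0 b0] at hcond
      exact (div_eq_iff hPm0).mp hcond |>.trans (mul_comm _ _)
  -- sum of Pm equals 1
  have hPmsum : ∑ a0, ∑ b0, margA0B0 P x0 y0 x0 y0 a0 b0 = 1 := by
    have h1 := hPbox.2 (x0, x0) (y0, y0)
    simp only [Fintype.sum_prod_type] at h1
    unfold margA0B0
    rw [← h1]
    exact Finset.sum_congr rfl fun a0 _ => Finset.sum_comm
  -- marginal decomposition
  have hmargeq : ∀ a1 b1 x1 y1, margA1B1 P x0 y0 a1 b1 x1 y1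
      = ∑ a0, ∑ b0, margA0B0 P x0 y0 x0 y0 a0 b0 *
          (Q (a0, a1) (b0, b1) (x0, x1) (y0, y1) / margA0B0 Q x0 y0 x0 y0 a0 b0) := by
    intro a1 b1 x1 y1
    unfold margA1B1
    exact Finset.sum_congr rfl fun a0 _ => Finset.sum_congr rfl fun b0 _ =>
      hkey a0 b0 a1 b1 x1 y1
  -- construct local model
  classical
  set w : (A × B) × Fin m → ℝ := fun z =>
    margA0B0 P x0 y0 x0 y0 z.1.1 z.1.2 *
      (r z.2 * (∑ a1, QA z.2 z.1.1 a1 x0 x0) * (∑ b1, QB z.2 z.1.2 b1 y0 y0)) /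
      margA0B0 Q x0 y0 x0 y0 z.1.1 z.1.2 with hw
  set pa : (A × B) × Fin m → A → X → ℝ := fun z a1 x1 =>
    if (∑ a1', QA z.2 z.1.1 a1' x0 x0) = 0 then (Fintype.card A : ℝ)⁻¹
    else QA z.2 z.1.1 a1 x0 x1 / (∑ a1', QA z.2 z.1.1 a1' x0 x0) with hpa
  set pb : (A × B) × Fin m → B → Y → ℝ := fun z b1 y1 =>
    if (∑ b1', QB z.2 z.1.2 b1' y0 y0) = 0 then (Fintype.card B : ℝ)⁻¹
    else QB z.2 z.1.2 b1 y0 y1 / (∑ b1', QB z.2 z.1.2 b1' y0 y0) with hpb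
  set e : ((A × B) × Fin m) ≃ Fin (Fintype.card ((A × B) × Fin m)) :=
    Fintype.equivFin _ with he
  apply hnl x0 y0
  refine ⟨Fintype.card ((A × B) × Fin m), fun i => w (e.symm i),
    fun i => pa (e.symm i), fun i => pb (e.symm i), ⟨?_, ?_⟩, ?_, ?_, ?_⟩
  · intro i
    exact div_nonneg (mul_nonneg (hPmnn x0 y0 _ _)
      (mul_nonneg (mul_nonneg (hr0 _) (hαnn _ _ x0)) (hβnn _ _ y0))) (hMnn x0 y0 _ _)
  · rw [Equiv.sum_comp e.symm w]
    simp only [hw]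
    rw [Fintype.sum_prod_type, Fintype.sum_prod_type]
    rw [← hPmsum]
    refine Finset.sum_congr rfl fun a0 _ => Finset.sum_congr rfl fun b0 _ => ?_
    simp only [← Finset.sum_div, ← Finset.mul_sum]
    rw [← hMQ x0 y0 a0 b0]
    by_cases hM0 : margA0B0 Q x0 y0 x0 y0 a0 b0 = 0
    · have hPm0 : margA0B0 P x0 y0 x0 y0 a0 b0 = 0 := by
        by_contra hne; exact hMne a0 b0 hne hM0
      rw [hPm0, zero_mul, zero_div]
    · rw [mul_div_assoc, div_self hM0, mul_one]
  · intro i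
    constructor
    · intro a1 x1
      simp only [hpa]
      split_ifs with hα
      · positivity
      · exact div_nonneg ((hQAall _).1.1 _ _ _ _) (hαnn _ _ x0)
    · intro x1
      simp only [hpa]
      split_ifs with hα
      · rw [Finset.sum_const, Finset.card_univ, nsmul_eq_mul]
        exact mul_inv_cancel₀ (Nat.cast_ne_zero.mpr Fintype.card_ne_zero)
      · rw [← Finset.sum_div, hαind]
        exact div_self hα
  · intro i
    constructor
    · intro b1 y1
      simp only [hpb]
      split_ifs with hβ
      · positivity
      · exact div_nonneg ((hQBall _).1.1 _ _ _ _) (hβnn _ _ y0)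
    · intro y1
      simp only [hpb]
      split_ifs with hβ
      · rw [Finset.sum_const, Finset.card_univ, nsmul_eq_mul]
        exact mul_inv_cancel₀ (Nat.cast_ne_zero.mpr Fintype.card_ne_zero)
      · rw [← Finset.sum_div, hβind]
        exact div_self hβ
  · intro a1 b1 x1 y1
    rw [Equiv.sum_comp e.symm (fun z => w z * pa z a1 x1 * pb z b1 y1)]
    rw [hmargeq a1 b1 x1 y1, Fintype.sum_prod_type, Fintype.sum_prod_type]
    refine Finset.sum_congr rfl fun a0 _ => Finset.sum_congr rfl fun b0 _ => ?_
    rw [hQeq]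
    rw [Finset.sum_div, Finset.mul_sum]
    refine Finset.sum_congr rfl fun l _ => ?_
    simp only [hw, hpa, hpb]
    by_cases hα : (∑ a1', QA l a0 a1' x0 x0) = 0
    · have hQA0 : QA l a0 a1 x0 x1 = 0 := by
        have hs : ∑ a1', QA l a0 a1' x0 x1 = 0 := (hαind l a0 x1).trans hα
        exact (Finset.sum_eq_zero_iff_of_nonneg
          (fun a1' _ => (hQAall l).1.1 _ _ _ _)).mp hs a1 (Finset.mem_univ a1)
      simp [hα, hQA0]
    · by_cases hβ : (∑ b1', QB l b0 b1' y0 y0) = 0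
      · have hQB0 : QB l b0 b1 y0 y1 = 0 := by
          have hs : ∑ b1', QB l b0 b1' y0 y1 = 0 := (hβind l b0 y1).trans hβ
          exact (Finset.sum_eq_zero_iff_of_nonneg
            (fun b1' _ => (hQBall l).1.1 _ _ _ _)).mp hs b1 (Finset.mem_univ b1)
        simp [hβ, hQB0]
      · rw [if_neg hα, if_neg hβ]
        by_cases hM0 : margA0B0 Q x0 y0 x0 y0 a0 b0 = 0
        · rw [hM0, div_zero, div_zero, mul_zero, zero_mul, zero_mul]
        · field_simp
end

section
/- Post-measurement states of a UR_ns classical–quantum state are classical–quantum states of unsteerable assemblages: Let {ς_{a0a1|x0x1}} be a UR_ns broadcasting-scenario assemblage on H_{B0} ⊗ H_{B1}, let π_0, π_1 be probability distributions on the input set X, and let σ_{ZW} = Σ π_0(x0)π_1(x1) |x0 x1⟩⟨x0 x1| ⊗ |a0 a1⟩⟨a0 a1| ⊗ ς_{a0a1|x0x1} be the associated classical–quantum state. Let {E_i} be a POVM on H_{B0} and, for k = (x0', a0', i), set F_k = |x0'⟩⟨x0'| ⊗ |a0'⟩⟨a0'| ⊗ E_i, acting on the X0, A0 and B0 tensor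 factors. Then for every k with tr((F_k ⊗ Id) σ_{ZW}) > 0, the normalized post-measurement state σ_W^k = tr_Z((F_k ⊗ Id) σ_{ZW}) / tr((F_k ⊗ Id) σ_{ZW}) (tr_Z denoting the partial trace over the X0, A0, B0 factors) is the classical–quantum state, with distribution π_1, of an unsteerable assemblage on H_{B1}: explicitly, σ_W^k = Σ_{λ',x1,a1} π_1(x1) r_k(λ') q^k_{λ'}(a1|x1) |x1⟩⟨x1| ⊗ |a1⟩⟨a1| ⊗ σ^{λ',k} for some probability distribution r_k on a finite set, conditional probability distributions q^k_{λ'}(a1|x1), and density operators σ^{λ',k} on H_{B1}. -/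
/-!
Write the UR_ns assemblage as `ς_{a0a1|x0x1} = Σ_λ r(λ) q_λ(a0,a1|x0,x1) σ_λ`. Measuring
`|x0'⟩⟨x0'| ⊗ |a0'⟩⟨a0'| ⊗ E_i` and tracing out `X0 A0 B0` leaves, up to the factor `π0(x0')`,
the classical-quantum state with distribution `π1` of
`a1, x1 ↦ Σ_λ r(λ) q_λ(a0',a1|x0',x1) tr_B0((E_i ⊗ 1) σ_λ)`.
Each `tr_B0((E_i ⊗ 1) σ_λ)` is positive, and non-signalling of `q_λ` makes the marginal
`Σ_{a1} q_λ(a0',a1|x0',x1)` independent of `x1`. Normalizing the operators to states and the weights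
to response functions gives a local hidden state model with hidden variable `λ`.
-/

open scoped ENNReal Matrix ComplexOrder
open Classical

noncomputable section

/-- A density operator on a finite-dimensional Hilbert space (as a matrix). -/
def IsDensity {d : Type*} [Fintype d] [DecidableEq d] (ρ : Matrix d d ℂ) : Prop :=
  ρ.PosSemidef ∧ ρ.trace = 1

/-- An assemblage: positive semidefinite operators `ϱ a x = ϱ_{a|x}` with
`Σ_a tr(ϱ_{a|x}) = 1` for every `x`. -/
def IsAssemblage {A X d : Type*} [Fintype A] [Fintype d] [DecidableEq d]
    (ϱ : A → X → Matrix d d ℂ) : Prop :=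
  (∀ a x, (ϱ a x).PosSemidef) ∧ ∀ x, ∑ a, (ϱ a x).trace = 1

/-- Non-signalling assemblage: the reduced state `Σ_a ϱ_{a|x}` does not depend on `x`. -/
def NSAssemblage {A X d : Type*} [Fintype A]
    (ϱ : A → X → Matrix d d ℂ) : Prop :=
  ∀ x x', ∑ a, ϱ a x = ∑ a, ϱ a x'

/-- Unsteerable assemblage: admits a local hidden state model. -/
def Unsteerable {A X d : Type*} [Fintype A] [Fintype d] [DecidableEq d]
    (ϱ : A → X → Matrix d d ℂ) : Prop :=
  ∃ (m : ℕ) (r : Fin m → ℝ) (p : Fin m → A → X → ℝ) (ρs : Fin m → Matrix d d ℂ),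
    IsProbDist r ∧ (∀ l, IsCondDist (p l)) ∧ (∀ l, IsDensity (ρs l)) ∧
    ∀ a x, ϱ a x = ∑ l, (r l * p l a x) • ρs l

/-- Partial trace over the second tensor factor. -/
def trB1 {d₀ d₁ : Type*} [Fintype d₁] (M : Matrix (d₀ × d₁) (d₀ × d₁) ℂ) :
    Matrix d₀ d₀ ℂ :=
  fun i j => ∑ b, M (i, b) (j, b)

/-- Partial trace over the first tensor factor. -/
def trB0 {d₀ d₁ : Type*} [Fintype d₀] (M : Matrix (d₀ × d₁) (d₀ × d₁) ℂ) :
    Matrix d₁ d₁ ℂ :=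
  fun i j => ∑ b, M (b, i) (b, j)

/-- A broadcasting-scenario assemblage `ϱ2` is a broadcast of the assemblage `ϱ'`. -/
def IsBroadcastAssemblage {A X d : Type*} [Fintype A] [Fintype d]
    (ϱ2 : (A × A) → (X × X) → Matrix (d × d) (d × d) ℂ)
    (ϱ' : A → X → Matrix d d ℂ) : Prop :=
  (∀ a0 x0 x1, ∑ a1, trB1 (ϱ2 (a0, a1) (x0, x1)) = ϱ' a0 x0) ∧
  (∀ a1 x0 x1, ∑ a0, trB0 (ϱ2 (a0, a1) (x0, x1)) = ϱ' a1 x1)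

/-- Non-signalling broadcasting-scenario assemblage: both marginal assemblages
are well defined. -/
def NSBroadcastAssemblage {A X d : Type*} [Fintype A] [Fintype d]
    (ϱ2 : (A × A) → (X × X) → Matrix (d × d) (d × d) ℂ) : Prop :=
  (∀ a0 x0 x1 x1', ∑ a1, trB1 (ϱ2 (a0, a1) (x0, x1)) = ∑ a1, trB1 (ϱ2 (a0, a1) (x0, x1'))) ∧
  (∀ a1 x0 x0' x1, ∑ a0, trB0 (ϱ2 (a0, a1) (x0, x1)) = ∑ a0, trB0 (ϱ2 (a0, a1) (x0', x1)))

/-- Unsteerable-realistic non-signalling (UR_ns) broadcasting-scenario assemblage. -/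
def IsURns {A X d : Type*} [Fintype A] [Fintype X] [Fintype d] [DecidableEq d]
    (ς : (A × A) → (X × X) → Matrix (d × d) (d × d) ℂ) : Prop :=
  ∃ (m : ℕ) (r : Fin m → ℝ) (q : Fin m → A → A → X → X → ℝ)
    (σ : Fin m → Matrix (d × d) (d × d) ℂ),
    IsProbDist r ∧
    (∀ l, IsBox (q l) ∧ NonSignalling (q l)) ∧
    (∀ l, IsDensity (σ l)) ∧
    ∀ aa xx, ς aa xx = ∑ l, (r l * q l aa.1 aa.2 xx.1 xx.2) • σ l

/-- The classical-quantum state `Σ_{x,a} π(x) |x⟩⟨x| ⊗ |a⟩⟨a| ⊗ ϱ_{a|x}`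
associated to an assemblage and an input distribution. -/
def cqState {X A d : Type*} (π : X → ℝ) (ϱ : A → X → Matrix d d ℂ) :
    Matrix (X × A × d) (X × A × d) ℂ :=
  fun p q =>
    if p.1 = q.1 ∧ p.2.1 = q.2.1 then (π p.1 : ℂ) * ϱ p.2.1 p.1 p.2.2 q.2.2 else 0

/-- Logarithm of a Hermitian matrix via its spectral decomposition (with the
convention `log 0 = 0` on the kernel); junk value `0` on non-Hermitian matrices. -/
def matLog {d : Type*} [Fintype d] [DecidableEq d] (M : Matrix d d ℂ) : Matrix d d ℂ :=
  if h : M.IsHermitian then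
    (h.eigenvectorUnitary : Matrix d d ℂ) *
      Matrix.diagonal (fun i => (Real.log (h.eigenvalues i) : ℂ)) *
      star (h.eigenvectorUnitary : Matrix d d ℂ)
  else 0

/-- Umegaki quantum relative entropy `S_Q(ρ‖σ) = tr[ρ(log ρ − log σ)] ∈ [0,∞]`,
infinite when the support of `ρ` is not contained in the support of `σ`. -/
def qRelEnt {d : Type*} [Fintype d] [DecidableEq d] (ρ σ : Matrix d d ℂ) : ℝ≥0∞ :=
  if ∀ v : d → ℂ, σ.mulVec v = 0 → ρ.mulVec v = 0 then
    ENNReal.ofReal ((ρ * (matLog ρ - matLog σ)).trace.re)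
  else ⊤

/-- KL-divergence for assemblages: supremum over input distributions of the quantum
relative entropy of the associated classical-quantum states. -/
def SA {X A d : Type*} [Fintype X] [Fintype A] [Fintype d] [DecidableEq X] [DecidableEq A]
    [DecidableEq d] (ϱ ς : A → X → Matrix d d ℂ) : ℝ≥0∞ :=
  ⨆ (π : X → ℝ) (_ : IsProbDist π), qRelEnt (cqState π ϱ) (cqState π ς)

/-- Relative entropy of steering of an assemblage: infimum of `SA` over
unsteerable assemblages. -/
def EA {X A d : Type*} [Fintype X] [Fintype A] [Fintype d] [DecidableEq X] [DecidableEq A]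
    [DecidableEq d] (ϱ : A → X → Matrix d d ℂ) : ℝ≥0∞ :=
  ⨅ (ς : A → X → Matrix d d ℂ) (_ : Unsteerable ς), SA ϱ ς

/-- Relative entropy of steering of a broadcasting-scenario assemblage: infimum of `SA`
over UR_ns assemblages. -/
def EA2 {X A d : Type*} [Fintype X] [Fintype A] [Fintype d] [DecidableEq X] [DecidableEq A]
    [DecidableEq d] (ϱ2 : (A × A) → (X × X) → Matrix (d × d) (d × d) ℂ) : ℝ≥0∞ :=
  ⨅ (ς : (A × A) → (X × X) → Matrix (d × d) (d × d) ℂ) (_ : IsURns ς), SA ϱ2 ς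

/-- The Choi matrix of a linear map on matrices. -/
def choiMatrix {d e : Type*} [Fintype d] [DecidableEq d]
    (E : Matrix d d ℂ →ₗ[ℂ] Matrix e e ℂ) : Matrix (e × d) (e × d) ℂ :=
  fun p q => E (Matrix.single p.2 q.2 1) p.1 q.1

/-- Completely positive trace-preserving map, characterized via Choi's theorem. -/
def IsCPTP {d e : Type*} [Fintype d] [DecidableEq d] [Fintype e] [DecidableEq e]
    (E : Matrix d d ℂ →ₗ[ℂ] Matrix e e ℂ) : Prop :=
  (choiMatrix E).PosSemidef ∧ ∀ M, (E M).trace = M.trace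

/-- An LOSR transformation of assemblages from the scenario `(X, A; H_B)` to the
broadcasting scenario, given by shared randomness `r`, classical pre- and
post-processings `I`, `O`, and CPTP maps `E λ`. -/
structure AssemblageLOSR (X A : Type*) (d : Type*)
    [Fintype X] [Fintype A] [Fintype d] [DecidableEq d] where
  nΛ : ℕ
  nC : ℕ
  r : Fin nΛ → ℝ
  I : Fin nC → X → X → X → Fin nΛ → ℝ
  O : A → A → A → Fin nC → ℝ
  E : Fin nΛ → (Matrix d d ℂ →ₗ[ℂ] Matrix (d × d) (d × d) ℂ)
  hr : IsProbDist r
  hI : ∀ x0 x1 l, (∀ c x, 0 ≤ I c x x0 x1 l) ∧ ∑ c, ∑ x, I c x x0 x1 l = 1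
  hO : ∀ a c, (∀ a0 a1, 0 ≤ O a0 a1 a c) ∧ ∑ a0, ∑ a1, O a0 a1 a c = 1
  hE : ∀ l, IsCPTP (E l)

/-- The action of an LOSR transformation of assemblages:
`M(ϱ)_{a0a1|x0x1} = Σ_{λ,c,a,x} r(λ) I(c,x|x0,x1,λ) O(a0,a1|a,c) E_λ(ϱ_{a|x})`. -/
def AssemblageLOSR.apply {X A d : Type*}
    [Fintype X] [Fintype A] [Fintype d] [DecidableEq d]
    (T : AssemblageLOSR X A d) (ϱ : A → X → Matrix d d ℂ) :
    (A × A) → (X × X) → Matrix (d × d) (d × d) ℂ :=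
  fun aa xx => ∑ l, ∑ c, ∑ a, ∑ x,
    (T.r l * T.I c x xx.1 xx.2 l * T.O aa.1 aa.2 a c) • T.E l (ϱ a x)

/-- A UR_ns-LOSR transformation: an LOSR transformation of assemblages mapping every
unsteerable assemblage to a UR_ns assemblage. -/
def AssemblageLOSR.IsURnsLOSR {X A d : Type*}
    [Fintype X] [Fintype A] [Fintype d] [DecidableEq d]
    (T : AssemblageLOSR X A d) : Prop :=
  ∀ ϱ : A → X → Matrix d d ℂ, IsAssemblage ϱ → Unsteerable ϱ → IsURns (T.apply ϱ)

end

noncomputable section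

/-- A POVM on a finite-dimensional Hilbert space. -/
def IsPOVM {ι d : Type*} [Fintype ι] [Fintype d] [DecidableEq d]
    (E : ι → Matrix d d ℂ) : Prop :=
  (∀ i, (E i).PosSemidef) ∧ ∑ i, E i = 1

/-- The operator `F_k ⊗ Id = |x0'⟩⟨x0'| ⊗ |a0'⟩⟨a0'| ⊗ E_i ⊗ Id` acting on the `X0`, `A0`,
`B0` factors of the broadcasting-scenario classical-quantum space. -/
def FkId {X A d : Type*} [DecidableEq X] [DecidableEq A]
    (x0' : X) (a0' : A) (Ei : Matrix d d ℂ) :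
    Matrix ((X × X) × (A × A) × (d × d)) ((X × X) × (A × A) × (d × d)) ℂ :=
  fun p q =>
    if p.1.1 = x0' ∧ q.1.1 = x0' ∧ p.2.1.1 = a0' ∧ q.2.1.1 = a0' ∧
        p.1.2 = q.1.2 ∧ p.2.1.2 = q.2.1.2 ∧ p.2.2.2 = q.2.2.2
    then Ei p.2.2.1 q.2.2.1 else 0

/-- Partial trace over the `X0`, `A0` and `B0` tensor factors. -/
def traceOutZ {X A d : Type*} [Fintype X] [Fintype A] [Fintype d]
    (M : Matrix ((X × X) × (A × A) × (d × d)) ((X × X) × (A × A) × (d × d)) ℂ) :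
    Matrix (X × A × d) (X × A × d) ℂ :=
  fun p q => ∑ x0, ∑ a0, ∑ b0,
    M ((x0, p.1), (a0, p.2.1), (b0, p.2.2)) ((x0, q.1), (a0, q.2.1), (b0, q.2.2))

open Matrix
open scoped Kronecker

section PartialTrace

variable {d₀ d₁ : Type*} [Fintype d₀]

theorem trB0_eq_sum_submatrix (M : Matrix (d₀ × d₁) (d₀ × d₁) ℂ) :
    trB0 M = ∑ b, M.submatrix (Prod.mk b) (Prod.mk b) := by
  ext i j
  simp [trB0, Matrix.sum_apply]

theorem posSemidef_trB0 {M : Matrix (d₀ × d₁) (d₀ × d₁) ℂ} (hM : M.PosSemidef) :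
    (trB0 M).PosSemidef := by
  rw [trB0_eq_sum_submatrix]
  exact posSemidef_sum _ fun b _ => hM.submatrix _

theorem trB0_sum {ι : Type*} (s : Finset ι) (M : ι → Matrix (d₀ × d₁) (d₀ × d₁) ℂ) :
    trB0 (∑ l ∈ s, M l) = ∑ l ∈ s, trB0 (M l) := by
  ext i j
  simp only [trB0, Matrix.sum_apply]
  exact Finset.sum_comm

theorem trB0_smul (c : ℝ) (M : Matrix (d₀ × d₁) (d₀ × d₁) ℂ) : trB0 (c • M) = c • trB0 M := by
  ext i j
  simp [trB0, Finset.smul_sum]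

variable [Fintype d₁] [DecidableEq d₁]

theorem trB0_kronecker_one_mul_comm (B : Matrix d₀ d₀ ℂ) (M : Matrix (d₀ × d₁) (d₀ × d₁) ℂ) :
    trB0 ((B ⊗ₖ 1) * M) = trB0 (M * (B ⊗ₖ 1)) := by
  ext i j
  simp only [trB0, mul_apply, kroneckerMap_apply, one_apply, mul_ite, mul_one, mul_zero, ite_mul,
    zero_mul, Fintype.sum_prod_type, Finset.sum_ite_eq, Finset.mem_univ, ↓reduceIte,
    Finset.sum_ite_eq']
  rw [Finset.sum_comm]
  exact Finset.sum_congr rfl fun _ _ => Finset.sum_congr rfl fun _ _ => mul_comm _ _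

open scoped MatrixOrder in
/-- Writing `E = B⋆B`, this is `tr_B0 ((B ⊗ 1) σ (B ⊗ 1)ᴴ)` by cyclicity of `tr_B0`. -/
theorem posSemidef_trB0_kronecker_one_mul [DecidableEq d₀] {E : Matrix d₀ d₀ ℂ}
    {σ : Matrix (d₀ × d₁) (d₀ × d₁) ℂ} (hE : E.PosSemidef) (hσ : σ.PosSemidef) :
    (trB0 ((E ⊗ₖ 1) * σ)).PosSemidef := by
  obtain ⟨B, rfl⟩ := CStarAlgebra.nonneg_iff_eq_star_mul_self.mp hE.nonneg
  have hfactor : (star B * B) ⊗ₖ (1 : Matrix d₁ d₁ ℂ) = (Bᴴ ⊗ₖ 1) * (B ⊗ₖ 1) := by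
    rw [← mul_kronecker_mul, mul_one, star_eq_conjTranspose]
  have hadjoint : Bᴴ ⊗ₖ (1 : Matrix d₁ d₁ ℂ) = (B ⊗ₖ 1)ᴴ := by
    rw [conjTranspose_kronecker, conjTranspose_one]
  rw [hfactor, mul_assoc, trB0_kronecker_one_mul_comm, hadjoint]
  exact posSemidef_trB0 (hσ.mul_mul_conjTranspose_same _)

end PartialTrace

section LocalHiddenStates

variable {A X d : Type*} [Fintype A]

theorem exists_isCondDist_mul_eq [Nonempty A] {w : A → X → ℝ} {c : ℝ} (hw : ∀ a x, 0 ≤ w a x)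
    (hc : ∀ x, ∑ a, w a x = c) : ∃ p : A → X → ℝ, IsCondDist p ∧ ∀ a x, w a x = c * p a x := by
  by_cases h0 : c = 0
  · refine ⟨fun _ _ => (Fintype.card A : ℝ)⁻¹, ⟨fun _ _ => by positivity, fun _ => by simp⟩,
      fun a x => ?_⟩
    rw [h0, zero_mul]
    exact (Finset.sum_eq_zero_iff_of_nonneg fun a _ => hw a x).mp (by rw [hc, h0]) a
      (Finset.mem_univ a)
  · refine ⟨fun a x => w a x / c, ⟨fun a x => div_nonneg (hw a x) ?_, fun x => ?_⟩,
      fun a x => by field_simp⟩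
    · exact hc x ▸ Finset.sum_nonneg fun a _ => hw a x
    · rw [← Finset.sum_div, hc, div_self h0]

theorem nsAssemblage_of_eq_sum_smul {m : ℕ} {ϱ : A → X → Matrix d d ℂ} {w : Fin m → A → X → ℝ}
    {c : Fin m → ℝ} {τ : Fin m → Matrix d d ℂ} (hc : ∀ l x, ∑ a, w l a x = c l)
    (hϱ : ∀ a x, ϱ a x = ∑ l, w l a x • τ l) : NSAssemblage ϱ := by
  have hmarginal : ∀ x, ∑ a, ϱ a x = ∑ l, c l • τ l := fun x => by
    simp only [hϱ, ← hc _ x, Finset.sum_smul]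
    exact Finset.sum_comm
  exact fun x x' => (hmarginal x).trans (hmarginal x').symm

variable [Fintype d] [DecidableEq d]

theorem Unsteerable.isAssemblage {ϱ : A → X → Matrix d d ℂ} (h : Unsteerable ϱ) :
    IsAssemblage ϱ := by
  obtain ⟨m, r, p, ρ, hr, hp, hρ, hϱ⟩ := h
  refine ⟨fun a x => ?_, fun x => ?_⟩
  · rw [hϱ]
    exact posSemidef_sum _ fun l _ => (hρ l).1.smul (mul_nonneg (hr.1 l) ((hp l).1 a x))
  · calc ∑ a, (ϱ a x).trace = ((∑ l, r l * ∑ a, p l a x : ℝ) : ℂ) := by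
          simp [hϱ, trace_sum, trace_smul, (hρ _).2, Finset.mul_sum, Finset.sum_comm (γ := A)]
      _ = 1 := by simp [(hp _).2, hr.2]

theorem exists_isDensity_smul_eq [Nonempty d] {τ : Matrix d d ℂ} (hτ : τ.PosSemidef) :
    ∃ ρ, IsDensity ρ ∧ τ = τ.trace.re • ρ := by
  have htr : τ.trace = τ.trace.re :=
    Complex.eq_re_of_ofReal_le (r := 0) (by rw [Complex.ofReal_zero]; exact hτ.trace_nonneg)
  by_cases ht : τ.trace.re = 0
  · refine ⟨(Fintype.card d : ℝ)⁻¹ • 1, ⟨PosSemidef.one.smul (by positivity), ?_⟩, ?_⟩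
    · simp [trace_one]
    · rw [ht, zero_smul, ← hτ.trace_eq_zero_iff, htr, ht, Complex.ofReal_zero]
  · refine ⟨τ.trace.re⁻¹ • τ, ⟨hτ.smul (inv_nonneg.2 ?_), ?_⟩, ?_⟩
    · exact (Complex.nonneg_iff.mp hτ.trace_nonneg).1
    · rw [trace_smul, htr, Complex.real_smul, Complex.ofReal_re, ← Complex.ofReal_mul,
        inv_mul_cancel₀ ht, Complex.ofReal_one]
    · rw [smul_smul, mul_inv_cancel₀ ht, one_smul]

/-- The hidden variable `l` gets weight `c l * tr (τ l) / s`, response `w l / c l` and state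
`τ l / tr (τ l)`. -/
theorem unsteerable_inv_smul_of_eq_sum_smul {m : ℕ} {ϱ : A → X → Matrix d d ℂ}
    {w : Fin m → A → X → ℝ} {c : Fin m → ℝ} {τ : Fin m → Matrix d d ℂ}
    (hw : ∀ l a x, 0 ≤ w l a x) (hc : ∀ l x, ∑ a, w l a x = c l) (hτ : ∀ l, (τ l).PosSemidef)
    (hϱ : ∀ a x, ϱ a x = ∑ l, w l a x • τ l) {x₀ : X}
    (hs : (∑ a, (ϱ a x₀).trace).re ≠ 0) :
    Unsteerable ((∑ a, (ϱ a x₀).trace).re⁻¹ • ϱ) := by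
  set s := (∑ a, (ϱ a x₀).trace).re
  have hs_eq : s = ∑ l, c l * (τ l).trace.re := by
    simp only [s, hϱ, trace_sum, trace_smul, Complex.re_sum, Complex.smul_re, smul_eq_mul,
      ← hc _ x₀, Finset.sum_mul]
    exact Finset.sum_comm
  have hweight : ∀ l, 0 ≤ c l * (τ l).trace.re := fun l =>
    mul_nonneg (hc l x₀ ▸ Finset.sum_nonneg fun a _ => hw l a x₀)
      (Complex.nonneg_iff.mp (hτ l).trace_nonneg).1
  obtain ⟨a₀, -, ha₀⟩ := Finset.exists_ne_zero_of_sum_ne_zero (by simpa [s] using hs)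
  have : Nonempty A := ⟨a₀⟩
  have : Nonempty d := by
    by_contra hd
    rw [not_nonempty_iff] at hd
    exact ha₀ (by simp [Matrix.trace])
  choose ρ hρ hτρ using fun l => exists_isDensity_smul_eq (hτ l)
  choose p hp hwp using fun l => exists_isCondDist_mul_eq (hw l) (hc l)
  refine ⟨m, fun l => s⁻¹ * (c l * (τ l).trace.re), p, ρ, ⟨fun l => ?_, ?_⟩, hp, hρ,
    fun a x => ?_⟩
  · exact mul_nonneg (inv_nonneg.2 (hs_eq ▸ Finset.sum_nonneg fun l _ => hweight l)) (hweight l)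
  · rw [← Finset.mul_sum, ← hs_eq, inv_mul_cancel₀ hs]
  · simp only [Pi.smul_apply, hϱ, Finset.smul_sum, smul_smul]
    refine Finset.sum_congr rfl fun l _ => ?_
    conv_lhs => rw [hτρ l, hwp l a x, smul_smul]
    congr 1
    ring

end LocalHiddenStates

section ClassicalQuantumStates

variable {X A d : Type*}

theorem smul_cqState (c : ℝ) (π : X → ℝ) (ϱ : A → X → Matrix d d ℂ) :
    c • cqState π ϱ = cqState π (c • ϱ) := by
  ext p q
  simp only [cqState, Matrix.smul_apply, Pi.smul_apply]
  split_ifs <;> simp [Complex.real_smul, mul_left_comm]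

variable [Fintype X] [Fintype A] [Fintype d]

theorem trace_cqState (π : X → ℝ) (ϱ : A → X → Matrix d d ℂ) :
    (cqState π ϱ).trace = ∑ x, (π x : ℂ) * ∑ a, (ϱ a x).trace := by
  simp [Matrix.trace, cqState, Fintype.sum_prod_type, Finset.mul_sum]

theorem NSAssemblage.trace_cqState {ϱ : A → X → Matrix d d ℂ} (hϱ : NSAssemblage ϱ) {π : X → ℝ}
    (hπ : ∑ x, π x = 1) (x₀ : X) : (cqState π ϱ).trace = ∑ a, (ϱ a x₀).trace := by
  simp_rw [_root_.trace_cqState, ← trace_sum, hϱ _ x₀, ← Finset.sum_mul, ← Complex.ofReal_sum, hπ,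
    Complex.ofReal_one, one_mul]

theorem trace_traceOutZ
    (M : Matrix ((X × X) × (A × A) × (d × d)) ((X × X) × (A × A) × (d × d)) ℂ) :
    (traceOutZ M).trace = M.trace := by
  let e : (X × A × d) × (X × A × d) ≃ (X × X) × (A × A) × (d × d) :=
    { toFun := fun p => ((p.2.1, p.1.1), (p.2.2.1, p.1.2.1), (p.2.2.2, p.1.2.2))
      invFun := fun q => ((q.1.2, q.2.1.2, q.2.2.2), (q.1.1, q.2.1.1, q.2.2.1))
      left_inv := fun _ => rfl
      right_inv := fun _ => rfl }
  conv_rhs => rw [Matrix.trace, ← e.sum_comp, Fintype.sum_prod_type]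
  simp [traceOutZ, Matrix.trace, Fintype.sum_prod_type, e]

end ClassicalQuantumStates

section ConditionalAssemblage

variable {X A d : Type*} [Fintype d] [DecidableEq d]

/-- The unnormalized assemblage left on `B1` once the first party has input `x0` and output `a0`
and the POVM element `E` has clicked on `B0`. -/
def conditionalAssemblage (ς2 : (A × A) → (X × X) → Matrix (d × d) (d × d) ℂ) (x0 : X) (a0 : A)
    (E : Matrix d d ℂ) : A → X → Matrix d d ℂ :=
  fun a1 x1 => trB0 ((E ⊗ₖ 1) * ς2 (a0, a1) (x0, x1))

theorem conditionalAssemblage_eq_sum_smul {m : ℕ}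
    {ς2 : (A × A) → (X × X) → Matrix (d × d) (d × d) ℂ} {r : Fin m → ℝ}
    {q : Fin m → A → A → X → X → ℝ} {σ : Fin m → Matrix (d × d) (d × d) ℂ}
    (hς : ∀ aa xx, ς2 aa xx = ∑ l, (r l * q l aa.1 aa.2 xx.1 xx.2) • σ l)
    (x0 : X) (a0 : A) (E : Matrix d d ℂ) (a1 : A) (x1 : X) :
    conditionalAssemblage ς2 x0 a0 E a1 x1 =
      ∑ l, (r l * q l a0 a1 x0 x1) • trB0 ((E ⊗ₖ 1) * σ l) := by
  simp only [conditionalAssemblage, hς, Matrix.mul_sum, Matrix.mul_smul, trB0_sum, trB0_smul]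

variable [Fintype X] [Fintype A] [DecidableEq X] [DecidableEq A]

theorem traceOutZ_FkId_mul_cqState (ς2 : (A × A) → (X × X) → Matrix (d × d) (d × d) ℂ)
    (π0 π1 : X → ℝ) (x0 : X) (a0 : A) (E : Matrix d d ℂ) :
    traceOutZ (FkId x0 a0 E * cqState (fun xx : X × X => π0 xx.1 * π1 xx.2) ς2) =
      π0 x0 • cqState π1 (conditionalAssemblage ς2 x0 a0 E) := by
  ext ⟨x1, a1, b1⟩ ⟨y1, c1, e1⟩
  simp only [traceOutZ, mul_apply, FkId, ite_and, cqState, Complex.ofReal_mul, mul_ite, ite_mul,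
    zero_mul, mul_zero, Fintype.sum_prod_type, Finset.sum_ite_irrel, Finset.sum_ite_eq,
    Finset.mem_univ, ↓reduceIte, Finset.sum_const_zero, Finset.sum_ite_eq', Matrix.smul_apply,
    conditionalAssemblage, trB0, kroneckerMap_apply, one_apply, mul_one, smul_ite,
    Complex.real_smul, smul_zero]
  split_ifs with hx ha
  · subst hx ha
    simp only [Finset.mul_sum]
    exact Finset.sum_congr rfl fun _ _ => Finset.sum_congr rfl fun _ _ => by ring
  all_goals rfl

end ConditionalAssemblage

theorem post_measurement_URns_is_cq_of_unsteerable_general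
    {X A d ι : Type*} [Fintype X] [Fintype A] [Fintype d] [Fintype ι]
    [DecidableEq X] [DecidableEq A] [DecidableEq d]
    (ς2 : (A × A) → (X × X) → Matrix (d × d) (d × d) ℂ) (hς : IsURns ς2)
    (π0 π1 : X → ℝ) (hπ1 : IsProbDist π1)
    (E : ι → Matrix d d ℂ) (hE : IsPOVM E) :
    ∀ (x0' : X) (a0' : A) (i : ι),
      0 < ((FkId x0' a0' (E i) *
              cqState (fun xx : X × X => π0 xx.1 * π1 xx.2) ς2).trace).re →
      ∃ ϱu : A → X → Matrix d d ℂ, IsAssemblage ϱu ∧ Unsteerable ϱu ∧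
        (((FkId x0' a0' (E i) *
            cqState (fun xx : X × X => π0 xx.1 * π1 xx.2) ς2).trace).re)⁻¹ •
          traceOutZ (FkId x0' a0' (E i) *
            cqState (fun xx : X × X => π0 xx.1 * π1 xx.2) ς2) =
        cqState π1 ϱu := by
  intro x0' a0' i hpos
  obtain ⟨m, r, q, σ, hr, hq, hσ, hς⟩ := hς
  set G := conditionalAssemblage ς2 x0' a0' (E i)
  have hw : ∀ l a x, 0 ≤ r l * q l a0' a x0' x := fun l a x => mul_nonneg (hr.1 l) ((hq l).1.1 ..)
  have hc : ∀ l x, ∑ a, r l * q l a0' a x0' x = r l * ∑ a, q l a0' a x0' x0' := fun l x => by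
    rw [← Finset.mul_sum, (hq l).2.1 a0' x0' x x0']
  have hτ : ∀ l, (trB0 ((E i ⊗ₖ 1) * σ l)).PosSemidef := fun l =>
    posSemidef_trB0_kronecker_one_mul (hE.1 i) (hσ l).1
  have hG := conditionalAssemblage_eq_sum_smul hς x0' a0' (E i)
  have hN : ((FkId x0' a0' (E i) * cqState (fun xx : X × X => π0 xx.1 * π1 xx.2) ς2).trace).re =
      π0 x0' * (∑ a, (G a x0').trace).re := by
    rw [← trace_traceOutZ, traceOutZ_FkId_mul_cqState, trace_smul,
      (nsAssemblage_of_eq_sum_smul hc hG).trace_cqState hπ1.2 x0', Complex.smul_re, smul_eq_mul]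
  obtain ⟨hπ0, hs⟩ := mul_ne_zero_iff.mp (hN ▸ hpos.ne')
  have hunsteerable := unsteerable_inv_smul_of_eq_sum_smul hw hc hτ hG hs
  refine ⟨_, hunsteerable.isAssemblage, hunsteerable, ?_⟩
  rw [traceOutZ_FkId_mul_cqState, smul_smul, smul_cqState, hN, mul_inv, mul_comm,
    ← mul_assoc, mul_inv_cancel₀ hπ0, one_mul]

/-- **Post-measurement states of a UR_ns classical-quantum state are classical-quantum
states of unsteerable assemblages.** -/
theorem post_measurement_URns_is_cq_of_unsteerable
    {X A d ι : Type*} [Fintype X] [Fintype A] [Fintype d] [Fintype ι]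
    [DecidableEq X] [DecidableEq A] [DecidableEq d]
    (ς2 : (A × A) → (X × X) → Matrix (d × d) (d × d) ℂ) (hς : IsURns ς2)
    (π0 π1 : X → ℝ) (hπ0 : IsProbDist π0) (hπ1 : IsProbDist π1)
    (E : ι → Matrix d d ℂ) (hE : IsPOVM E) :
    ∀ (x0' : X) (a0' : A) (i : ι),
      0 < ((FkId x0' a0' (E i) *
              cqState (fun xx : X × X => π0 xx.1 * π1 xx.2) ς2).trace).re →
      ∃ ϱu : A → X → Matrix d d ℂ, IsAssemblage ϱu ∧ Unsteerable ϱu ∧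
        (((FkId x0' a0' (E i) *
            cqState (fun xx : X × X => π0 xx.1 * π1 xx.2) ς2).trace).re)⁻¹ •
          traceOutZ (FkId x0' a0' (E i) *
            cqState (fun xx : X × X => π0 xx.1 * π1 xx.2) ς2) =
        cqState π1 ϱu :=
  post_measurement_URns_is_cq_of_unsteerable_general ς2 hς π0 π1 hπ1 E hE

end
end
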